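/- Let μ₀ = N(0,σ²), μ_Δ = N(Δ,σ²), q ∈ [0,1], μ = (1−q)μ₀ + q·μ_Δ. Then for integer α > 1, D_α(μ‖μ₀) = (1/(α−1))·ln( Σ_{k=0}^{α} C(α,k)·(1−q)^{α−k}·q^k·exp(Δ²(k²−k)/(2σ²)) ). -/

import Mathlib

open Real

/-- The one-dimensional Gaussian density with mean `m` and standard deviation `σ`. -/
noncomputable def gaussianPdf (m σ x : ℝ) : ℝ :=
  (1 / (σ * Real.sqrt (2 * π))) * Real.exp (-(x - m) ^ 2 / (2 * σ ^ 2))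

lemma integrable_gaussianPdf' (m σ : ℝ) (hσ : 0 < σ) :
    MeasureTheory.Integrable (gaussianPdf m σ) := by
  have hb : (0:ℝ) < 1/(2*σ^2) := by positivity
  have h := ((integrable_exp_neg_mul_sq hb).comp_sub_right m).const_mul
    (1 / (σ * Real.sqrt (2 * π)))
  unfold gaussianPdf
  convert h using 2 with x
  ring_nf

lemma integral_gaussianPdf' (m σ : ℝ) (hσ : 0 < σ) :
    ∫ x : ℝ, gaussianPdf m σ x = 1 := by
  have hb : (0:ℝ) < 1/(2*σ^2) := by positivity
  unfold gaussianPdf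
  have h1 : ∫ x : ℝ, Real.exp (-(x - m) ^ 2 / (2 * σ ^ 2)) = Real.sqrt (π / (1/(2*σ^2))) := by
    rw [← integral_gaussian]
    rw [← MeasureTheory.integral_sub_right_eq_self (fun x => Real.exp (-(1/(2*σ^2)) * x ^ 2)) m]
    congr 1; funext x; ring_nf
  rw [MeasureTheory.integral_const_mul, h1]
  have : π / (1/(2*σ^2)) = (2*π) * σ^2 := by field_simp
  rw [this, Real.sqrt_mul (by positivity : (0:ℝ) ≤ 2*π) (σ^2), Real.sqrt_sq hσ.le]
  field_simp

lemma gaussianPdf_pos (m σ x : ℝ) (hσ : 0 < σ) : 0 < gaussianPdf m σ x := by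
  unfold gaussianPdf
  have : 0 < Real.sqrt (2*π) := Real.sqrt_pos.2 (by positivity)
  positivity

lemma pointwise_expand (σ Δ q : ℝ) (hσ : 0 < σ) (α : ℕ) (x : ℝ) :
    (((1 - q) * gaussianPdf 0 σ x + q * gaussianPdf Δ σ x) / gaussianPdf 0 σ x) ^ α
        * gaussianPdf 0 σ x
      = ∑ k ∈ Finset.range (α + 1),
          (α.choose k : ℝ) * (1 - q) ^ (α - k) * q ^ k *
            (Real.exp (Δ ^ 2 * ((k : ℝ) ^ 2 - k) / (2 * σ ^ 2)) * gaussianPdf ((k:ℝ)*Δ) σ x) := by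
  have hg0 : gaussianPdf 0 σ x ≠ 0 := (gaussianPdf_pos 0 σ x hσ).ne'
  have hr : gaussianPdf Δ σ x / gaussianPdf 0 σ x = Real.exp ((2*Δ*x - Δ^2) / (2*σ^2)) := by
    unfold gaussianPdf
    rw [mul_div_mul_left _ _ (by
      have : 0 < Real.sqrt (2*π) := Real.sqrt_pos.2 (by positivity)
      positivity), ← Real.exp_sub]
    congr 1
    field_simp
    ring
  have hsplit : ((1 - q) * gaussianPdf 0 σ x + q * gaussianPdf Δ σ x) / gaussianPdf 0 σ x
      = q * Real.exp ((2*Δ*x - Δ^2) / (2*σ^2)) + (1 - q) := by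
    rw [add_div, mul_div_assoc, mul_div_assoc, hr, div_self hg0, mul_one]
    ring
  rw [hsplit, add_pow, Finset.sum_mul]
  refine Finset.sum_congr rfl fun k hk => ?_
  have hkey : Real.exp ((2*Δ*x - Δ^2) / (2*σ^2)) ^ k * gaussianPdf 0 σ x
      = Real.exp (Δ ^ 2 * ((k : ℝ) ^ 2 - k) / (2 * σ ^ 2)) * gaussianPdf ((k:ℝ)*Δ) σ x := by
    unfold gaussianPdf
    rw [← Real.exp_nat_mul, mul_left_comm, ← Real.exp_add, mul_left_comm, ← Real.exp_add]
    congr 2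
    field_simp
    ring
  rw [mul_pow]
  linear_combination (q ^ k * (1-q) ^ (α - k) * (α.choose k : ℝ)) * hkey

/-- For the mixture `μ = (1−q)·N(0,σ²) + q·N(Δ,σ²)` and `μ₀ = N(0,σ²)`, and integer
`α > 1`, `D_α(μ‖μ₀) = (1/(α−1))·ln( Σ_{k=0}^{α} C(α,k)·(1−q)^{α−k}·q^k·exp(Δ²(k²−k)/(2σ²)) )`. -/
theorem stmt_7 (σ Δ q : ℝ) (hσ : 0 < σ) (hq0 : 0 ≤ q) (hq1 : q ≤ 1)
    (α : ℕ) (hα : 1 < α) :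
    (1 / ((α : ℝ) - 1)) *
        Real.log (∫ x : ℝ,
          (((1 - q) * gaussianPdf 0 σ x + q * gaussianPdf Δ σ x) / gaussianPdf 0 σ x) ^ α
            * gaussianPdf 0 σ x)
      = (1 / ((α : ℝ) - 1)) *
          Real.log (∑ k ∈ Finset.range (α + 1),
            (α.choose k : ℝ) * (1 - q) ^ (α - k) * q ^ k *
              Real.exp (Δ ^ 2 * ((k : ℝ) ^ 2 - k) / (2 * σ ^ 2))) := by
  congr 2
  calc ∫ x : ℝ, (((1 - q) * gaussianPdf 0 σ x + q * gaussianPdf Δ σ x) / gaussianPdf 0 σ x) ^ α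
            * gaussianPdf 0 σ x
      = ∫ x : ℝ, ∑ k ∈ Finset.range (α + 1),
          (α.choose k : ℝ) * (1 - q) ^ (α - k) * q ^ k *
            (Real.exp (Δ ^ 2 * ((k : ℝ) ^ 2 - k) / (2 * σ ^ 2)) * gaussianPdf ((k:ℝ)*Δ) σ x) := by
        simp_rw [pointwise_expand σ Δ q hσ α]
    _ = ∑ k ∈ Finset.range (α + 1), ∫ x : ℝ,
          (α.choose k : ℝ) * (1 - q) ^ (α - k) * q ^ k *
            (Real.exp (Δ ^ 2 * ((k : ℝ) ^ 2 - k) / (2 * σ ^ 2)) * gaussianPdf ((k:ℝ)*Δ) σ x) := by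
        refine MeasureTheory.integral_finset_sum _ fun k _ => ?_
        exact ((integrable_gaussianPdf' ((k:ℝ)*Δ) σ hσ).const_mul _).const_mul _
    _ = ∑ k ∈ Finset.range (α + 1),
          (α.choose k : ℝ) * (1 - q) ^ (α - k) * q ^ k *
            Real.exp (Δ ^ 2 * ((k : ℝ) ^ 2 - k) / (2 * σ ^ 2)) := by
        refine Finset.sum_congr rfl fun k _ => ?_
        rw [MeasureTheory.integral_const_mul, MeasureTheory.integral_const_mul,
          integral_gaussianPdf' _ _ hσ, mul_one]
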